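/- Let F be a field, V a finite-dimensional F-vector space, m : V → V a linear endomorphism, and δ_0, δ_1, …, δ_k : V → F linear functionals such that for each l (0 ≤ l ≤ k) the functional δ_l ∘ m − δ_l lies in the F-linear span of {δ_0, …, δ_{l−1}} (for l = 0 this means δ_0 ∘ m = δ_0). Let Z = ∩_{l=0}^{k} ker δ_l. Then m maps Z into Z, and trace(m) = trace(m restricted to Z) + dim_F(V / Z). -/

import Mathlib

open LinearMap Submodule

section prod
variable (R : Type*) [CommRing R] (M N : Type*) [AddCommGroup M] [Module R M]
  [AddCommGroup N] [Module R N] [Module.Free R M] [Module.Finite R M]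
  [Module.Free R N] [Module.Finite R N]

lemma trace_prod_decomp (f : (M × N) →ₗ[R] (M × N)) :
    trace R (M × N) f
      = trace R M ((fst R M N) ∘ₗ f ∘ₗ inl R M N)
        + trace R N ((snd R M N) ∘ₗ f ∘ₗ inr R M N) := by
  have hf : f = (inl R M N ∘ₗ (fst R M N ∘ₗ f)) + (inr R M N ∘ₗ (snd R M N ∘ₗ f)) := by
    ext x <;> simp
  calc trace R (M × N) f
      = trace R (M × N) (inl R M N ∘ₗ (fst R M N ∘ₗ f))
        + trace R (M × N) (inr R M N ∘ₗ (snd R M N ∘ₗ f)) := by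
        conv_lhs => rw [hf]
        simp
    _ = _ := by
        rw [trace_comp_comm' (fst R M N ∘ₗ f) (inl R M N),
          trace_comp_comm' (snd R M N ∘ₗ f) (inr R M N)]
        simp [comp_assoc]
end prod

section decomp
variable {F : Type*} [Field F] {V : Type*} [AddCommGroup V] [Module F V]
  [FiniteDimensional F V] (p : Submodule F V) (m : V →ₗ[F] V)
  (h : ∀ x ∈ p, m x ∈ p)

lemma trace_eq_trace_restrict_add_trace_mapQ :
    trace F V m = trace F p (m.restrict h)
      + trace F (V ⧸ p) (p.mapQ p m h) := by
  obtain ⟨q, hq⟩ := Submodule.exists_isCompl p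
  set e := Submodule.prodEquivOfIsCompl p q hq
  have := LinearMap.trace_conj' m e.symm
  rw [← this, trace_prod_decomp]
  congr 1
  · congr 1
    ext x
    have h2 : m (x : V) ∈ p := h _ x.2
    have h1 : e ((x : p), (0:q)) = (x : V) := by simp [e, Submodule.coe_prodEquivOfIsCompl']
    have h3 : e.symm (m (x:V)) = (⟨m x, h2⟩, 0) := by
      rw [LinearEquiv.symm_apply_eq]
      simp [e, Submodule.coe_prodEquivOfIsCompl']
    have : (LinearEquiv.conj e.symm) m (LinearMap.inl F p q x) = ((m.restrict h x : p), (0:q)) := by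
      simp only [LinearEquiv.conj_apply, comp_apply, LinearEquiv.coe_coe, coe_inl]
      rw [LinearEquiv.symm_symm, h1, h3]
      rfl
    simp only [comp_apply]
    rw [this]
    rfl
  · set φ := Submodule.quotientEquivOfIsCompl p q hq
    rw [← LinearMap.trace_conj' (p.mapQ p m h) φ]
    congr 1
    ext y
    have key : ∀ v : V, (e.symm v).2 = φ (Submodule.Quotient.mk v) := by
      intro v
      have hv : v = ((e.symm v).1 : V) + ((e.symm v).2 : V) := by
        conv_lhs => rw [← e.apply_symm_apply v]
        rfl
      have hsub : v - ((e.symm v).2 : V) = ((e.symm v).1 : V) := by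
        nth_rewrite 1 [hv]; abel
      have : Submodule.Quotient.mk (p := p) v = Submodule.Quotient.mk (((e.symm v).2 : V)) := by
        rw [Submodule.Quotient.eq, hsub]
        exact (e.symm v).1.2
      rw [this]
      exact (Submodule.quotientEquivOfIsCompl_apply_mk_coe hq _).symm
    have h1 : e ((0:p), y) = (y : V) := by simp [e, Submodule.coe_prodEquivOfIsCompl']
    simp only [comp_apply, coe_inr, LinearEquiv.conj_apply, LinearEquiv.coe_coe,
      LinearEquiv.symm_symm]
    rw [h1]
    show ((e.symm (m (y : V))).2 : V) = _
    rw [key]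
    congr 2
end decomp

/-- Inductive trace lemma: if `m : V → V` and the functionals `δ₀, …, δ_k` satisfy
`δ_l ∘ m − δ_l ∈ span {δ₀, …, δ_{l−1}}` for every `l`, then `m` preserves
`Z = ⋂ ker δ_l` and `trace m = trace (m |_Z) + dim (V / Z)`. -/
theorem trace_of_filtration_invariant (F : Type*) [Field F]
    (V : Type*) [AddCommGroup V] [Module F V] [FiniteDimensional F V]
    (k : ℕ) (δ : Fin (k + 1) → (V →ₗ[F] F)) (m : V →ₗ[F] V)
    (hδ : ∀ l : Fin (k + 1),
      (δ l).comp m - δ l ∈ Submodule.span F (δ '' {i : Fin (k + 1) | i < l})) :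
    ∃ h : ∀ x ∈ (⨅ l, LinearMap.ker (δ l)), m x ∈ (⨅ l, LinearMap.ker (δ l)),
      LinearMap.trace F V m
        = LinearMap.trace F (⨅ l, LinearMap.ker (δ l) : Submodule F V) (m.restrict h)
          + (Module.finrank F (V ⧸ (⨅ l, LinearMap.ker (δ l) : Submodule F V)) : F) := by
  set Z : Submodule F V := ⨅ l, LinearMap.ker (δ l) with hZ
  -- every element of the relevant spans vanishes on `Z`
  have hvanish : ∀ (S : Set (Fin (k + 1))) (g : V →ₗ[F] F),
      g ∈ Submodule.span F (δ '' S) → ∀ x ∈ Z, g x = 0 := by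
    intro S g hg x hx
    have hx' : ∀ l, δ l x = 0 := by
      intro l
      exact (Submodule.mem_iInf _).1 hx l
    have : Submodule.span F (δ '' S) ≤ LinearMap.ker ((LinearMap.applyₗ x :
        (V →ₗ[F] F) →ₗ[F] F)) := by
      rw [Submodule.span_le]
      rintro _ ⟨i, -, rfl⟩
      simp [LinearMap.mem_ker, hx' i]
    simpa using this hg
  have h : ∀ x ∈ Z, m x ∈ Z := by
    intro x hx
    rw [Submodule.mem_iInf]
    intro l
    have h0 : ((δ l).comp m - δ l) x = 0 := hvanish _ _ (hδ l) x hx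
    have h1 : δ l x = 0 := (Submodule.mem_iInf _).1 hx l
    simp only [LinearMap.sub_apply, LinearMap.comp_apply, h1, sub_zero] at h0
    simpa [LinearMap.mem_ker] using h0
  refine ⟨h, ?_⟩
  rw [trace_eq_trace_restrict_add_trace_mapQ Z m h]
  congr 1
  -- it remains to show the trace of the induced map on the quotient is the dimension
  set Q := V ⧸ Z
  set q : Q →ₗ[F] Q := Z.mapQ Z m h with hq
  set δQ : Fin (k + 1) → (Q →ₗ[F] F) := fun l =>
    Z.liftQ (δ l) (iInf_le (fun l => LinearMap.ker (δ l)) l) with hδQ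
  set c : (Q →ₗ[F] F) →ₗ[F] (V →ₗ[F] F) := LinearMap.lcomp F F Z.mkQ with hc
  have hc_inj : Function.Injective c := by
    intro g₁ g₂ hgg
    ext x
    exact LinearMap.congr_fun hgg x
  have hcδQ : ∀ l, c (δQ l) = δ l := fun l =>
    Z.liftQ_mkQ (δ l) (iInf_le (fun l => LinearMap.ker (δ l)) l)
  -- the hypothesis descends to the quotient
  have hδQ' : ∀ l : Fin (k + 1),
      (δQ l).comp q - δQ l ∈ Submodule.span F (δQ '' {i : Fin (k + 1) | i < l}) := by
    intro l
    have hcval : c ((δQ l).comp q - δQ l) = (δ l).comp m - δ l := by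
      ext v
      rfl
    have himg : δ '' {i : Fin (k + 1) | i < l} = c '' (δQ '' {i : Fin (k + 1) | i < l}) := by
      rw [← Set.image_comp]
      exact Set.image_congr fun i _ => (hcδQ i).symm
    have hmem : c ((δQ l).comp q - δQ l) ∈
        Submodule.map c (Submodule.span F (δQ '' {i : Fin (k + 1) | i < l})) := by
      rw [← Submodule.span_image, ← himg, hcval]
      exact hδ l
    obtain ⟨y, hy, hyy⟩ := Submodule.mem_map.1 hmem
    rwa [← hc_inj hyy]
  -- the span of the descended functionals is everything
  have hspan : Submodule.span F (Set.range δQ) = ⊤ := by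
    set W := Submodule.span F (Set.range δQ)
    have hco : W.dualCoannihilator = ⊥ := by
      rw [eq_bot_iff]
      intro x hx
      rw [Submodule.mem_dualCoannihilator] at hx
      obtain ⟨v, rfl⟩ := Z.mkQ_surjective x
      have hvZ : v ∈ Z := by
        rw [Submodule.mem_iInf]
        intro l
        have := hx (δQ l) (Submodule.subset_span ⟨l, rfl⟩)
        rw [hδQ] at this
        exact this
      rw [Submodule.mem_bot, Submodule.mkQ_apply]
      exact (Submodule.Quotient.mk_eq_zero Z).mpr hvZ
    have hfin := Subspace.finrank_add_finrank_dualCoannihilator_eq W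
    rw [hco] at hfin
    simp only [finrank_bot, add_zero] at hfin
    apply Submodule.eq_top_of_finrank_eq
    rw [Subspace.dual_finrank_eq]
    exact hfin
  -- the induced map minus the identity is nilpotent
  set n : Module.End F Q := q - 1 with hn
  have hkey : ∀ j : ℕ, ∀ f : Q →ₗ[F] F,
      f ∈ Submodule.span F (δQ '' {i : Fin (k + 1) | (i : ℕ) < j}) →
      f.comp ((n ^ j : Module.End F Q) : Q →ₗ[F] Q) = 0 := by
    intro j
    induction j with
    | zero =>
      intro f hf
      have : (δQ '' {i : Fin (k + 1) | (i : ℕ) < 0}) = ∅ := by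
        simp [Set.eq_empty_iff_forall_notMem]
      rw [this, Submodule.span_empty, Submodule.mem_bot] at hf
      subst hf
      rfl
    | succ j ih =>
      intro f hf
      have hstep : f.comp (n : Q →ₗ[F] Q) ∈
          Submodule.span F (δQ '' {i : Fin (k + 1) | (i : ℕ) < j}) := by
        have hT : Submodule.span F (δQ '' {i : Fin (k + 1) | (i : ℕ) < j + 1}) ≤
            Submodule.comap (LinearMap.lcomp F F (n : Q →ₗ[F] Q))
              (Submodule.span F (δQ '' {i : Fin (k + 1) | (i : ℕ) < j})) := by
          rw [Submodule.span_le]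
          rintro _ ⟨i, hi, rfl⟩
          simp only [SetLike.mem_coe, Submodule.mem_comap, LinearMap.lcomp_apply']
          have : (δQ i).comp (n : Q →ₗ[F] Q) = (δQ i).comp q - δQ i := by
            have hn' : (n : Q →ₗ[F] Q) = q - LinearMap.id := rfl
            rw [hn', LinearMap.comp_sub, LinearMap.comp_id]
          rw [this]
          refine Submodule.span_mono ?_ (hδQ' i)
          apply Set.image_mono
          intro i' hi'
          simp only [Set.mem_setOf_eq] at hi' ⊢
          have h1 : (i' : ℕ) < (i : ℕ) := hi'
          have h2 : (i : ℕ) < j + 1 := hi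
          omega
        exact hT hf
      have hpow : ((n ^ (j + 1) : Module.End F Q) : Q →ₗ[F] Q)
          = (n : Q →ₗ[F] Q).comp ((n ^ j : Module.End F Q) : Q →ₗ[F] Q) := by
        rw [pow_succ']
        rfl
      rw [hpow, ← LinearMap.comp_assoc]
      exact ih _ hstep
  -- `n` is nilpotent
  have hnil : IsNilpotent n := by
    refine ⟨k + 1, LinearMap.ext fun x => ?_⟩
    have hx : ∀ φ : Module.Dual F Q, φ (((n ^ (k + 1) : Module.End F Q) : Q →ₗ[F] Q) x) = 0 := by
      intro φ
      have hall : {i : Fin (k + 1) | (i : ℕ) < k + 1} = Set.univ := by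
        ext i
        simp [i.is_lt, Fin.is_le]
      have hφ : φ ∈ Submodule.span F (δQ '' {i : Fin (k + 1) | (i : ℕ) < k + 1}) := by
        rw [hall, Set.image_univ, hspan]
        trivial
      exact LinearMap.congr_fun (hkey (k + 1) φ hφ) x
    simpa using (Module.forall_dual_apply_eq_zero_iff F _).1 hx
  have h0 : LinearMap.trace F Q (n : Q →ₗ[F] Q) = 0 :=
    (LinearMap.isNilpotent_trace_of_isNilpotent hnil).eq_zero
  have hq' : q = (n : Q →ₗ[F] Q) + LinearMap.id := by
    rw [← Module.End.one_eq_id]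
    exact (sub_add_cancel q 1).symm
  rw [hq', map_add, h0, zero_add, LinearMap.trace_id]
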